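/- Let p be an odd prime and a ∈ ℤ_p. Then for all x ∈ ℤ_p: (∑_{k=0}^{p−1} C(a,k)·C(−1−a,k)·x^k)² ≡ ∑_{k=0}^{p−1} C(2k,k)·C(a,k)·C(−1−a,k)·(x(1−x))^k (mod p²). -/

import Mathlib

/-!
For fixed `x`, the difference of the two sides is the value at `a` of a polynomial
`squareDefect p x` whose coefficients are `p`-integral, since only `k!` with `k < p` occurs in a
denominator. It vanishes at `a = 0, …, p - 1`, where the truncated sums are complete and reduce to
the Legendre identity `P_n(1 - 2x)² = ∑ₖ C(2k,k) C(n,k) C(n+k,k) (x² - x)ᵏ`, and, by the symmetry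
`a ↦ -1 - a`, also at `a = -1, …, -p`. Dividing by the monic `∏_{c=-p}^{p-1} (X - c)` over the
`p`-integral rationals, the difference is a `p`-integral multiple of `∏_{c=-p}^{p-1} (a - c)`.
If `a ≡ n (mod p)` with `0 ≤ n < p`, the factors `a - n` and `a - (n - p)` are both divisible
by `p`.
-/

/-- Generalized binomial coefficient C(a,k) = a(a-1)...(a-k+1)/k!. -/
def gchoose (a : ℚ) (k : ℕ) : ℚ :=
  (∏ i ∈ Finset.range k, (a - i)) / (Nat.factorial k : ℚ)

/-- `x` is a `p`-adic integer: its reduced denominator is not divisible by `p`. -/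
def IsPInt (p : ℕ) (x : ℚ) : Prop := ¬ p ∣ x.den

/-- `x ≡ y (mod p^e)` for rationals: `(x - y)/p^e` is a `p`-adic integer. -/
def ModCong (p e : ℕ) (x y : ℚ) : Prop :=
  ∃ z : ℚ, ¬ p ∣ z.den ∧ x - y = (p : ℚ) ^ e * z

/-- The Legendre polynomial `P_n(x) = ∑_{k=0}^n C(n,k) C(n+k,k) ((x-1)/2)^k`. -/
noncomputable def legendre (n : ℕ) : Polynomial ℚ :=
  ∑ k ∈ Finset.range (n + 1),
    Polynomial.C ((n.choose k : ℚ) * ((n + k).choose k)) *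
      (Polynomial.C (1/2 : ℚ) * (Polynomial.X - 1)) ^ k

open Polynomial Finset

theorem gchoose_eq_ringChoose (a : ℚ) (k : ℕ) : gchoose a k = Ring.choose a k := by
  rw [Ring.choose_eq_smul, gchoose, smul_eq_mul, ← aeval_eq_smeval, aeval_def, ← eval_map,
    descPochhammer_map, descPochhammer_eval_eq_prod_range, inv_mul_eq_div]

theorem gchoose_natCast (n k : ℕ) : gchoose n k = n.choose k := by
  rw [gchoose_eq_ringChoose, Ring.choose_natCast]

theorem gchoose_neg_one_sub_natCast (n k : ℕ) :
    gchoose (-1 - n) k = (-1) ^ k * (n + k).choose k := by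
  rw [gchoose_eq_ringChoose, show (-1 - n : ℚ) = -((n + 1 : ℕ) : ℚ) by push_cast; ring,
    Ring.choose_neg, show (((n + 1 : ℕ) : ℚ) + k - 1) = ((n + k : ℕ) : ℚ) by push_cast; ring,
    Ring.choose_natCast]
  simp [Units.smul_def]

section PIntegral

variable {p : ℕ} [Fact p.Prime]

theorem isPInt_iff_mem_integer {x : ℚ} : IsPInt p x ↔ x ∈ (Rat.padicValuation p).integer :=
  Rat.padicValuation_le_one_iff.symm

theorem inv_natCast_mem_integer {d : ℕ} (hd : ¬ p ∣ d) :
    (d : ℚ)⁻¹ ∈ (Rat.padicValuation p).integer := by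
  rw [← isPInt_iff_mem_integer, IsPInt, Rat.inv_natCast_den]
  split_ifs <;> simp_all

theorem inv_factorial_mem_integer {k : ℕ} (hk : k < p) :
    (k.factorial : ℚ)⁻¹ ∈ (Rat.padicValuation p).integer :=
  inv_natCast_mem_integer fun h => by
    rw [(Fact.out : p.Prime).dvd_factorial] at h
    omega

theorem exists_natCast_sub_dvd (a : (Rat.padicValuation p).integer) :
    ∃ n : ℕ, n < p ∧ (p : (Rat.padicValuation p).integer) ∣ a - n := by
  have hden : ¬ p ∣ (a : ℚ).den := isPInt_iff_mem_integer.2 a.2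
  have hd : ((a : ℚ).den : ZMod p) ≠ 0 := by rwa [Ne, ZMod.natCast_eq_zero_iff]
  set n := ((a : ℚ).num * ((a : ℚ).den : ZMod p)⁻¹ : ZMod p).val
  obtain ⟨e, he⟩ : (p : ℤ) ∣ (a : ℚ).num - n * (a : ℚ).den := by
    rw [← ZMod.intCast_zmod_eq_zero_iff_dvd]
    push_cast
    rw [ZMod.natCast_val, ZMod.cast_id, mul_assoc, inv_mul_cancel₀ hd, mul_one, sub_self]
  refine ⟨n, ZMod.val_lt _, ⟨e * ((a : ℚ).den : ℚ)⁻¹,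
    Subring.mul_mem _ (intCast_mem _ e) (inv_natCast_mem_integer hden)⟩, Subtype.ext ?_⟩
  have he' : ((a : ℚ).num : ℚ) - n * (a : ℚ).den = p * e := by exact_mod_cast he
  push_cast
  nth_rw 1 [← Rat.num_div_den (a : ℚ)]
  field_simp
  linear_combination he'

theorem modCong_of_dvd {e : ℕ} {x y : ℚ} {u : (Rat.padicValuation p).integer}
    (hu : (u : ℚ) = x - y) (h : (p : (Rat.padicValuation p).integer) ^ e ∣ u) :
    ModCong p e x y := by
  obtain ⟨z, rfl⟩ := h
  exact ⟨z, isPInt_iff_mem_integer.2 z.2, by rw [← hu]; push_cast; rfl⟩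

end PIntegral

theorem Polynomial.prod_X_sub_C_dvd_of_isRoot {R ι : Type*} [CommRing R] [IsDomain R]
    {s : Finset ι} {f : ι → R} (hf : Set.InjOn f s) {F : R[X]}
    (h : ∀ i ∈ s, F.IsRoot (f i)) : ∏ i ∈ s, (X - C (f i)) ∣ F := by
  classical
  rcases eq_or_ne F 0 with rfl | hF
  · exact dvd_zero _
  rw [← prod_image (f := fun c => X - C c) hf, prod_eq_multiset_prod,
    Multiset.prod_X_sub_C_dvd_iff_le_roots hF, Multiset.le_iff_subset (s.image f).nodup]
  intro c hc
  obtain ⟨i, hi, rfl⟩ := mem_image.1 hc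
  exact (mem_roots hF).2 (h i hi)

theorem sq_dvd_prod_Ico_sub {R : Type*} [CommRing R] {p n : ℕ} {a : R} (hn : n < p)
    (h : (p : R) ∣ a - n) : (p : R) ^ 2 ∣ ∏ c ∈ Ico (-(p : ℤ)) p, (a - c) := by
  have hpair : ({(n : ℤ), (n : ℤ) - p} : Finset ℤ) ⊆ Ico (-(p : ℤ)) p := by
    intro c hc
    simp only [mem_insert, mem_singleton] at hc
    rw [mem_Ico]
    omega
  refine dvd_trans ?_ (prod_dvd_prod_of_subset _ _ _ hpair)
  rw [prod_pair (by omega), sq]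
  refine mul_dvd_mul (by simpa using h) ?_
  have : a - ((n - p : ℤ) : R) = (a - n) + p := by push_cast; ring
  rw [this]
  exact dvd_add h dvd_rfl

theorem coeff_sum_range_C_mul_X_pow {R : Type*} [Semiring R] {c : ℕ → R} {N : ℕ}
    (hc : ∀ k, N ≤ k → c k = 0) (m : ℕ) :
    (∑ k ∈ range N, C (c k) * X ^ k).coeff m = c m := by
  simp only [finsetSum_coeff, coeff_C_mul_X_pow, sum_ite_eq, mem_range]
  split_ifs with h
  · rfl
  · exact (hc m (not_lt.1 h)).symm

theorem eval_sum_range_C_mul_X_pow {R : Type*} [CommSemiring R] {c : ℕ → R} {N M : ℕ}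
    (hNM : N ≤ M) (hc : ∀ k, N ≤ k → c k = 0) (x : R) :
    (∑ k ∈ range N, C (c k) * X ^ k).eval x = ∑ k ∈ range M, c k * x ^ k := by
  simp only [eval_finsetSum, eval_mul, eval_C, eval_pow, eval_X]
  exact sum_subset (range_subset_range.2 hNM) fun k _ hk => by
    rw [hc k (by simpa using hk), zero_mul]

section ChooseIdentities

variable {R : Type*} [CommRing R]

theorem cast_choose_succ_right (m k : ℕ) :
    ((k : R) + 1) * m.choose (k + 1) = (m - k) * m.choose k := by
  rcases le_or_gt k m with h | h
  · have e : ((m.choose (k + 1) * (k + 1) : ℕ) : R) = (m.choose k * (m - k) : ℕ) :=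
      congrArg _ (Nat.choose_succ_right_eq m k)
    push_cast [Nat.cast_sub h] at e
    linear_combination e
  · simp [Nat.choose_eq_zero_of_lt h, Nat.choose_eq_zero_of_lt (h.trans (Nat.lt_succ_self k))]

theorem cast_choose_succ_left (m k : ℕ) :
    ((m : R) + 1 - k) * (m + 1).choose k = (m + 1) * m.choose k := by
  rcases le_or_gt k (m + 1) with h | h
  · have e : ((m.choose k * (m + 1) : ℕ) : R) = ((m + 1).choose k * (m + 1 - k) : ℕ) :=
      congrArg _ (Nat.choose_mul_succ_eq m k)
    push_cast [Nat.cast_sub h] at e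
    linear_combination -e
  · simp [Nat.choose_eq_zero_of_lt h, Nat.choose_eq_zero_of_lt (show m < k by omega)]

theorem cast_succ_mul_choose (m k : ℕ) :
    ((k : R) + 1) * (m + 1).choose (k + 1) = (m + 1) * m.choose k := by
  have e : (((m + 1) * m.choose k : ℕ) : R) = ((m + 1).choose (k + 1) * (k + 1) : ℕ) :=
    congrArg _ (Nat.add_one_mul_choose_eq m k)
  push_cast at e
  linear_combination -e

theorem cast_succ_mul_choose_two_mul (k : ℕ) :
    ((k : R) + 1) * (2 * (k + 1)).choose (k + 1) = 2 * (2 * k + 1) * (2 * k).choose k := by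
  have e : (((k + 1) * (2 * (k + 1)).choose (k + 1) : ℕ) : R)
      = ((2 * (2 * k + 1)) * (2 * k).choose k : ℕ) := by
    simpa only [Nat.centralBinom_eq_two_mul_choose] using
      congrArg _ (Nat.succ_mul_centralBinom_succ k)
  push_cast at e
  exact e

end ChooseIdentities

def legendreCoeff (n k : ℕ) : ℚ := n.choose k * (n + k).choose k

def companionCoeff (n k : ℕ) : ℚ := n.choose k * (n + 1 + k).choose k

theorem legendreCoeff_eq_zero {n k : ℕ} (h : n < k) : legendreCoeff n k = 0 := by
  simp [legendreCoeff, Nat.choose_eq_zero_of_lt h]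

theorem companionCoeff_eq_zero {n k : ℕ} (h : n < k) : companionCoeff n k = 0 := by
  simp [companionCoeff, Nat.choose_eq_zero_of_lt h]

theorem legendreCoeff_succ_right (m k : ℕ) :
    ((k : ℚ) + 1) ^ 2 * legendreCoeff m (k + 1) = (m - k) * (m + k + 1) * legendreCoeff m k := by
  have h1 := cast_choose_succ_right (R := ℚ) m k
  have h2 := cast_succ_mul_choose (R := ℚ) (m + k) k
  rw [legendreCoeff, legendreCoeff, ← add_assoc]
  push_cast at h2 ⊢
  linear_combination ((k : ℚ) + 1) * ((m + k + 1).choose (k + 1) : ℚ) * h1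
    + ((m : ℚ) - k) * (m.choose k : ℚ) * h2

theorem companionCoeff_eq (m k : ℕ) :
    ((m : ℚ) + 1) * companionCoeff m k = (m + 1 + k) * legendreCoeff m k := by
  have h := cast_choose_succ_left (R := ℚ) (m + k) k
  rw [companionCoeff, legendreCoeff, show m + 1 + k = m + k + 1 by ring]
  push_cast at h ⊢
  linear_combination (m.choose k : ℚ) * h

theorem legendreCoeff_succ_left (m k : ℕ) :
    ((m : ℚ) + 1 - k) * legendreCoeff (m + 1) k = (m + 1 + k) * legendreCoeff m k := by
  have h1 := cast_choose_succ_left (R := ℚ) m k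
  have h2 := companionCoeff_eq m k
  refine mul_left_cancel₀ (show (m : ℚ) + 1 ≠ 0 by positivity) ?_
  simp only [legendreCoeff, companionCoeff] at *
  linear_combination ((m : ℚ) + 1) * ((m + 1 + k).choose k : ℚ) * h1 + ((m : ℚ) + 1) * h2

theorem companionCoeff_succ_right (m k : ℕ) :
    ((k : ℚ) + 1) ^ 2 * companionCoeff m (k + 1)
      = (m - k) * (m + k + 2) * companionCoeff m k := by
  have h1 := cast_choose_succ_right (R := ℚ) m k
  have h2 := cast_succ_mul_choose (R := ℚ) (m + 1 + k) k
  rw [companionCoeff, companionCoeff, show m + 1 + (k + 1) = m + 1 + k + 1 by ring]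
  push_cast at h2 ⊢
  linear_combination ((k : ℚ) + 1) * ((m + 1 + k + 1).choose (k + 1) : ℚ) * h1
    + ((m : ℚ) - k) * (m.choose k : ℚ) * h2

theorem legendreCoeff_recurrence (n k : ℕ) :
    ((n : ℚ) + 2) * legendreCoeff (n + 2) (k + 1)
      = (2 * n + 3) * (legendreCoeff (n + 1) (k + 1) + 2 * legendreCoeff (n + 1) k)
        - (n + 1) * legendreCoeff n (k + 1) := by
  have r2 := legendreCoeff_succ_right (n + 2) k
  have r1 := legendreCoeff_succ_right (n + 1) k
  have r0 := legendreCoeff_succ_right n k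
  have l1 := legendreCoeff_succ_left (n + 1) k
  have l0 := legendreCoeff_succ_left n k
  refine mul_left_cancel₀ (show ((k : ℚ) + 1) ^ 2 ≠ 0 by positivity) ?_
  push_cast at *
  linear_combination ((n : ℚ) + 2) * (r2 + (n + 3 + k) * l1) - (2 * (n : ℚ) + 3) * r1
    + ((n : ℚ) + 1) * (r0 - (n - k) * l0)

theorem companionCoeff_recurrence (n k : ℕ) :
    ((n : ℚ) + 2) * companionCoeff (n + 1) k
      = (2 * n + 3) * legendreCoeff (n + 1) k - (n + 1) * companionCoeff n k := by
  have e1 := companionCoeff_eq (n + 1) k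
  have e0 := companionCoeff_eq n k
  have l0 := legendreCoeff_succ_left n k
  push_cast at *
  linear_combination e1 + e0 - l0

theorem legendreCoeff_sq_recurrence (n k : ℕ) :
    (2 * (k : ℚ) + 1) * ((n + 2) ^ 2 * legendreCoeff (n + 2) (k + 1)
        - (2 * n + 3) ^ 2 * legendreCoeff (n + 1) (k + 1)
        + 2 * (n + 1) * (2 * n + 3) * companionCoeff n (k + 1)
        - (n + 1) ^ 2 * legendreCoeff n (k + 1))
      = 2 * (k + 1) * ((2 * n + 3) ^ 2 * legendreCoeff (n + 1) k
        - 2 * (n + 1) * (2 * n + 3) * companionCoeff n k) := by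
  have r2 := legendreCoeff_succ_right (n + 2) k
  have r1 := legendreCoeff_succ_right (n + 1) k
  have r0 := legendreCoeff_succ_right n k
  have l1 := legendreCoeff_succ_left (n + 1) k
  have l0 := legendreCoeff_succ_left n k
  have t0 := companionCoeff_succ_right n k
  have e0 := companionCoeff_eq n k
  refine mul_left_cancel₀ (show ((k : ℚ) + 1) ^ 2 * ((n : ℚ) + 1) ≠ 0 by positivity) ?_
  push_cast at *
  linear_combination (2 * (k : ℚ) + 1) * ((n + 1) * (n + 2) ^ 2 * (r2 + (n + 3 + k) * l1)
    - (n + 1) * (2 * n + 3) ^ 2 * r1 - (n + 1) ^ 3 * (r0 - (n - k) * l0)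
    + 2 * (n + 1) * (2 * n + 3) * ((n + 1) * t0 + (n - k) * (n + k + 2) * (e0 - l0)))
    + 4 * (k + 1) ^ 3 * (n + 1) * (2 * n + 3) * (e0 - l0)

-- `legendrePoly n = (legendre n).comp (1 - 2 * X)`
noncomputable def legendrePoly (n : ℕ) : ℚ[X] :=
  ∑ k ∈ range (n + 1), C ((-1) ^ k * legendreCoeff n k) * X ^ k

noncomputable def legendreSqPoly (n : ℕ) : ℚ[X] :=
  ∑ k ∈ range (n + 1), C ((2 * k).choose k * legendreCoeff n k) * X ^ k

noncomputable def legendreCrossPoly (n : ℕ) : ℚ[X] :=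
  ∑ k ∈ range (n + 1), C ((2 * k).choose k * companionCoeff n k) * X ^ k

theorem coeff_legendrePoly (n m : ℕ) :
    (legendrePoly n).coeff m = (-1) ^ m * legendreCoeff n m :=
  coeff_sum_range_C_mul_X_pow (fun k hk => by rw [legendreCoeff_eq_zero (by omega), mul_zero]) m

theorem coeff_legendreSqPoly (n m : ℕ) :
    (legendreSqPoly n).coeff m = (2 * m).choose m * legendreCoeff n m :=
  coeff_sum_range_C_mul_X_pow (fun k hk => by rw [legendreCoeff_eq_zero (by omega), mul_zero]) m

theorem coeff_legendreCrossPoly (n m : ℕ) :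
    (legendreCrossPoly n).coeff m = (2 * m).choose m * companionCoeff n m :=
  coeff_sum_range_C_mul_X_pow (fun k hk => by rw [companionCoeff_eq_zero (by omega), mul_zero]) m

theorem legendrePoly_recurrence (n : ℕ) :
    C ((n : ℚ) + 2) * legendrePoly (n + 2)
      = C (2 * (n : ℚ) + 3) * ((1 - 2 * X) * legendrePoly (n + 1))
        - C ((n : ℚ) + 1) * legendrePoly n := by
  ext (_ | k) <;>
    simp only [coeff_sub, coeff_C_mul, sub_mul, one_mul, mul_assoc, coeff_ofNat_mul,
      coeff_X_mul_zero, coeff_X_mul, coeff_legendrePoly]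
  · simp only [pow_zero, legendreCoeff, Nat.choose_zero_right, Nat.cast_one, add_zero, mul_one,
      mul_zero, sub_zero]
    ring
  · linear_combination (-1) ^ (k + 1) * legendreCoeff_recurrence n k

theorem legendreCrossPoly_recurrence (n : ℕ) :
    C ((n : ℚ) + 2) * legendreCrossPoly (n + 1)
      = C (2 * (n : ℚ) + 3) * legendreSqPoly (n + 1)
        - C ((n : ℚ) + 1) * legendreCrossPoly n := by
  ext k
  simp only [coeff_sub, coeff_C_mul, coeff_legendreSqPoly, coeff_legendreCrossPoly]
  linear_combination ((2 * k).choose k : ℚ) * companionCoeff_recurrence n k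

theorem legendreSqPoly_recurrence (n : ℕ) :
    C (((n : ℚ) + 2) ^ 2) * legendreSqPoly (n + 2)
      = C ((2 * (n : ℚ) + 3) ^ 2) * ((1 + 4 * X) * legendreSqPoly (n + 1))
        - C (2 * ((n : ℚ) + 1) * (2 * n + 3)) * ((1 + 4 * X) * legendreCrossPoly n)
        + C (((n : ℚ) + 1) ^ 2) * legendreSqPoly n := by
  ext (_ | k) <;>
    simp only [coeff_add, coeff_sub, coeff_C_mul, add_mul, one_mul, mul_assoc, coeff_ofNat_mul,
      coeff_X_mul_zero, coeff_X_mul, coeff_legendreSqPoly, coeff_legendreCrossPoly]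
  · simp only [mul_zero, Nat.choose_self, Nat.cast_one, legendreCoeff, Nat.choose_zero_right,
      add_zero, mul_one, companionCoeff]
    ring
  · have hc := cast_succ_mul_choose_two_mul (R := ℚ) k
    have h := legendreCoeff_sq_recurrence n k
    refine mul_left_cancel₀ (show (k : ℚ) + 1 ≠ 0 by positivity) ?_
    linear_combination (((n : ℚ) + 2) ^ 2 * legendreCoeff (n + 2) (k + 1)
        - (2 * n + 3) ^ 2 * legendreCoeff (n + 1) (k + 1)
        + 2 * (n + 1) * (2 * n + 3) * companionCoeff n (k + 1)
        - (n + 1) ^ 2 * legendreCoeff n (k + 1)) * hc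
      + 2 * ((2 * k).choose k : ℚ) * h

-- The product of consecutive terms is carried along: it enters the recurrence of `legendreSqPoly`.
theorem legendrePoly_sq_and_mul (n : ℕ) :
    legendrePoly n ^ 2 = (legendreSqPoly n).comp (X ^ 2 - X) ∧
    legendrePoly (n + 1) ^ 2 = (legendreSqPoly (n + 1)).comp (X ^ 2 - X) ∧
    legendrePoly (n + 1) * legendrePoly n
      = (1 - 2 * X) * (legendreCrossPoly n).comp (X ^ 2 - X) := by
  induction n with
  | zero =>
    simp only [legendrePoly, zero_add, range_one, legendreCoeff, Nat.choose_self, Nat.cast_one,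
      mul_one, map_mul, map_pow, map_neg, map_one, map_natCast, sum_singleton, pow_zero, one_pow,
      legendreSqPoly, mul_zero, one_comp, Nat.reduceAdd, sum_range_succ, Nat.choose_succ_self_right,
      add_zero, pow_one, Nat.cast_ofNat, one_mul, neg_mul, add_comp, mul_comp, ofNat_comp, X_comp,
      legendreCrossPoly, companionCoeff, true_and]
    constructor <;> ring
  | succ n ih =>
    obtain ⟨hsq, hsq₁, hmul⟩ := ih
    have hL := legendrePoly_recurrence n
    have hR := congrArg (·.comp (X ^ 2 - X)) (legendreSqPoly_recurrence n)
    have hS := congrArg (·.comp (X ^ 2 - X)) (legendreCrossPoly_recurrence n)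
    simp only [mul_comp, add_comp, sub_comp, C_comp, X_comp, one_comp, ofNat_comp] at hR hS
    have h2 : C ((n : ℚ) + 2) ≠ 0 := C_ne_zero.2 (by positivity)
    refine ⟨hsq₁, mul_left_cancel₀ (pow_ne_zero 2 h2) ?_, mul_left_cancel₀ h2 ?_⟩
    · simp only [map_add, map_mul, map_pow, map_natCast, map_ofNat, map_one] at hL hR ⊢
      linear_combination (((n : ℚ[X]) + 2) * legendrePoly (n + 2)
          + (2 * n + 3) * (1 - 2 * X) * legendrePoly (n + 1) - (n + 1) * legendrePoly n) * hL
        + (2 * (n : ℚ[X]) + 3) ^ 2 * (1 - 2 * X) ^ 2 * hsq₁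
        - 2 * ((n : ℚ[X]) + 1) * (2 * n + 3) * (1 - 2 * X) * hmul
        + ((n : ℚ[X]) + 1) ^ 2 * hsq - hR
    · simp only [map_add, map_mul, map_natCast, map_ofNat, map_one] at hL hS ⊢
      linear_combination legendrePoly (n + 1) * hL + (2 * (n : ℚ[X]) + 3) * (1 - 2 * X) * hsq₁
        - ((n : ℚ[X]) + 1) * hmul - (1 - 2 * X) * hS

noncomputable def binomialPoly (k : ℕ) : ℚ[X] :=
  C ((k.factorial : ℚ)⁻¹) * descPochhammer ℚ k

noncomputable def binomialSymmPoly (k : ℕ) : ℚ[X] :=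
  binomialPoly k * (binomialPoly k).comp (-1 - X)

theorem eval_binomialSymmPoly (k : ℕ) (a : ℚ) :
    (binomialSymmPoly k).eval a = gchoose a k * gchoose (-1 - a) k := by
  simp only [binomialSymmPoly, binomialPoly, eval_mul, eval_comp, eval_C, eval_sub, eval_neg,
    eval_one, eval_X, descPochhammer_eval_eq_prod_range, gchoose, inv_mul_eq_div]

theorem binomialSymmPoly_mem_lifts {p : ℕ} [Fact p.Prime] {k : ℕ} (hk : k < p) :
    binomialSymmPoly k ∈ lifts (Rat.padicValuation p).integer.subtype := by
  let B := C (⟨_, inv_factorial_mem_integer hk⟩ : (Rat.padicValuation p).integer) *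
    descPochhammer (Rat.padicValuation p).integer k
  refine ⟨B * B.comp (-1 - X), ?_⟩
  simp [B, binomialSymmPoly, binomialPoly, Polynomial.map_comp, descPochhammer_map]

noncomputable def squareDefect (p : ℕ) (x : ℚ) : ℚ[X] :=
  (∑ k ∈ range p, binomialSymmPoly k * C (x ^ k)) ^ 2
    - ∑ k ∈ range p, binomialSymmPoly k * C ((2 * k).choose k * (x * (1 - x)) ^ k)

theorem eval_squareDefect (p : ℕ) (x a : ℚ) :
    (squareDefect p x).eval a
      = (∑ k ∈ range p, gchoose a k * gchoose (-1 - a) k * x ^ k) ^ 2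
        - ∑ k ∈ range p,
            ((2 * k).choose k : ℚ) * gchoose a k * gchoose (-1 - a) k * (x * (1 - x)) ^ k := by
  simp only [squareDefect, eval_sub, eval_pow, eval_finsetSum, eval_mul, eval_C,
    eval_binomialSymmPoly]
  congr 1
  exact sum_congr rfl fun k _ => by ring

theorem squareDefect_eval_neg_one_sub (p : ℕ) (x a : ℚ) :
    (squareDefect p x).eval (-1 - a) = (squareDefect p x).eval a := by
  rw [eval_squareDefect, eval_squareDefect, sub_sub_cancel]
  congr 1
  · congr 1
    exact sum_congr rfl fun k _ => by ring
  · exact sum_congr rfl fun k _ => by ring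

theorem squareDefect_eval_natCast {p n : ℕ} (hn : n < p) (x : ℚ) :
    (squareDefect p x).eval (n : ℚ) = 0 := by
  have hL : ∑ k ∈ range p, gchoose n k * gchoose (-1 - n) k * x ^ k
      = (legendrePoly n).eval x := by
    rw [legendrePoly, eval_sum_range_C_mul_X_pow hn fun k hk => by
      rw [legendreCoeff_eq_zero (by omega), mul_zero]]
    refine sum_congr rfl fun k _ => ?_
    rw [gchoose_natCast, gchoose_neg_one_sub_natCast, legendreCoeff]
    ring
  have hR : ∑ k ∈ range p, ((2 * k).choose k : ℚ) * gchoose n k * gchoose (-1 - n) k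
      * (x * (1 - x)) ^ k = ((legendreSqPoly n).comp (X ^ 2 - X)).eval x := by
    have hy : (X ^ 2 - X : ℚ[X]).eval x = -1 * (x * (1 - x)) := by
      simp only [eval_sub, eval_pow, eval_X]
      ring
    rw [eval_comp, hy, legendreSqPoly, eval_sum_range_C_mul_X_pow hn fun k hk => by
      rw [legendreCoeff_eq_zero (by omega), mul_zero]]
    refine sum_congr rfl fun k _ => ?_
    rw [gchoose_natCast, gchoose_neg_one_sub_natCast, legendreCoeff, mul_pow (-1 : ℚ)]
    ring
  rw [eval_squareDefect, hL, hR, ← eval_pow, (legendrePoly_sq_and_mul n).1, sub_self]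

theorem squareDefect_eval_intCast {p : ℕ} {c : ℤ} (hc : c ∈ Ico (-(p : ℤ)) p) (x : ℚ) :
    (squareDefect p x).eval (c : ℚ) = 0 := by
  obtain ⟨hlo, hhi⟩ := mem_Ico.1 hc
  rcases lt_or_ge c 0 with hneg | hnonneg
  · obtain ⟨n, rfl⟩ : ∃ n : ℕ, c = -1 - n := ⟨(-1 - c).toNat, by omega⟩
    push_cast
    rw [squareDefect_eval_neg_one_sub, squareDefect_eval_natCast (by omega)]
  · lift c to ℕ using hnonneg
    exact_mod_cast squareDefect_eval_natCast (by omega) x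

theorem squareDefect_mem_lifts {p : ℕ} [Fact p.Prime] {x : ℚ}
    (hx : x ∈ (Rat.padicValuation p).integer) :
    squareDefect p x ∈ lifts (Rat.padicValuation p).integer.subtype := by
  have hC : ∀ c ∈ (Rat.padicValuation p).integer,
      C c ∈ liftsRing (Rat.padicValuation p).integer.subtype := fun c hc =>
    (lifts_iff_liftsRing _ _).1 (C_mem_lifts (Rat.padicValuation p).integer.subtype ⟨c, hc⟩)
  have hB : ∀ k ∈ range p,
      binomialSymmPoly k ∈ liftsRing (Rat.padicValuation p).integer.subtype :=
    fun k hk => (lifts_iff_liftsRing _ _).1 (binomialSymmPoly_mem_lifts (mem_range.1 hk))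
  have hx' : x * (1 - x) ∈ (Rat.padicValuation p).integer :=
    mul_mem hx (sub_mem (one_mem _) hx)
  rw [lifts_iff_liftsRing]
  exact sub_mem (pow_mem (sum_mem fun k hk => mul_mem (hB k hk) (hC _ (pow_mem hx k))) _)
    (sum_mem fun k hk => mul_mem (hB k hk) (hC _ (mul_mem (natCast_mem _ _) (pow_mem hx' k))))

theorem sq_sum_cong_general (p : ℕ) (hp : p.Prime)
    (a x : ℚ) (ha : IsPInt p a) (hx : IsPInt p x) :
    ModCong p 2
      ((∑ k ∈ Finset.range p, gchoose a k * gchoose (-1 - a) k * x ^ k) ^ 2)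
      (∑ k ∈ Finset.range p,
        ((2 * k).choose k : ℚ) * gchoose a k * gchoose (-1 - a) k * (x * (1 - x)) ^ k) := by
  have : Fact p.Prime := ⟨hp⟩
  rw [isPInt_iff_mem_integer] at ha hx
  obtain ⟨F, hF⟩ := squareDefect_mem_lifts hx
  have hF_eval (b : (Rat.padicValuation p).integer) :
      ((F.eval b : (Rat.padicValuation p).integer) : ℚ) = (squareDefect p x).eval (b : ℚ) := by
    rw [← hF, coe_mapRingHom]
    exact (eval_map_apply (Rat.padicValuation p).integer.subtype b).symm
  have hroots : ∏ c ∈ Ico (-(p : ℤ)) p, (X - C (c : (Rat.padicValuation p).integer)) ∣ F :=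
    prod_X_sub_C_dvd_of_isRoot Int.cast_injective.injOn fun c hc => Subtype.ext <| by
      rw [hF_eval]
      simpa using squareDefect_eval_intCast hc x
  obtain ⟨n, hn, hdvd⟩ := exists_natCast_sub_dvd ⟨a, ha⟩
  refine modCong_of_dvd ((hF_eval ⟨a, ha⟩).trans (eval_squareDefect p x a))
    ((sq_dvd_prod_Ico_sub hn hdvd).trans ?_)
  simpa [eval_prod] using eval_dvd (x := ⟨a, ha⟩) hroots

theorem sq_sum_cong (p : ℕ) (hp : p.Prime) (hodd : Odd p)
    (a x : ℚ) (ha : IsPInt p a) (hx : IsPInt p x) :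
    ModCong p 2
      ((∑ k ∈ Finset.range p, gchoose a k * gchoose (-1 - a) k * x ^ k) ^ 2)
      (∑ k ∈ Finset.range p,
        ((2 * k).choose k : ℚ) * gchoose a k * gchoose (-1 - a) k * (x * (1 - x)) ^ k) :=
  sq_sum_cong_general p hp a x ha hx
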